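/- (Admissible boundary conditions for reasonable long-range interactions.) Let G = (V,E) be an infinite connected graph in which every vertex has finite degree, with fixed origin o, and let J be reasonable interactions on V with associated function f, exponent r > 0 and constant c ∈ (0,1). Suppose ξ ∈ ℝ^V is such that there exists M_ξ ∈ ℝ with |ξ_x| ≤ M_ξ · f(d_G(o,x)^{−r}) for all x ∈ V ∖ {o}. Then for every λ ≥ 1/c, every C ≥ 1 and every x ∈ V, Ã(x, V, λ, ξ, C) < ∞ (that is, ξ ∈ Ξ(λ)). -/

import Mathlib

open scoped ENNReal

/-- A walk of length `m` in `(R, J)`: the interior vertices lie in `R` and all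
traversed interactions are non-zero. -/
def IsWalk {V : Type*} (J : V → V → ℝ) (R : Set V) (m : ℕ) (w : ℕ → V) : Prop :=
  (∀ i, 0 < i → i < m → w i ∈ R) ∧ ∀ i < m, J (w i) (w (i + 1)) ≠ 0

/-- The quantity `Ã(x, R, λ, ξ, C)` (case `n = 2`), valued in `[1, ∞]`: the smallest
`A ≥ 1` such that for every `z ∈ V` and every walk `x₀ = x, …, x_m = z` in `(R, J)`,
`|ξ_z| ≤ C · A · λ^m · ∏_{i=1}^m f(J_{x_{i-1},x_i})` (`∞` if no such `A` exists). -/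
noncomputable def tildeAL {V : Type*} (J : V → V → ℝ) (f : ℝ → ℝ) (lam : ℝ)
    (ξ : V → ℝ) (C : ℝ) (x : V) (R : Set V) : ℝ≥0∞ :=
  sInf {A : ℝ≥0∞ | 1 ≤ A ∧ ∀ (m : ℕ) (w : ℕ → V), IsWalk J R m w → w 0 = x →
    ENNReal.ofReal |ξ (w m)| ≤
      ENNReal.ofReal C * A *
        ENNReal.ofReal (lam ^ m * ∏ i ∈ Finset.range m, f (J (w i) (w (i + 1))))}

private lemma aux_prod_one_le {ι : Type*} (s : Finset ι) (g : ι → ℝ)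
    (h : ∀ i ∈ s, 1 ≤ g i) : 1 ≤ ∏ i ∈ s, g i := by
  calc (1 : ℝ) = ∏ _i ∈ s, 1 := by simp
    _ ≤ ∏ i ∈ s, g i := Finset.prod_le_prod (fun i _ => zero_le_one) h

private lemma aux_single_le_prod {ι : Type*} (s : Finset ι) (g : ι → ℝ)
    (h : ∀ i ∈ s, 1 ≤ g i) {a : ι} (ha : a ∈ s) : g a ≤ ∏ i ∈ s, g i := by
  classical
  rw [← Finset.mul_prod_erase s g ha]
  exact le_mul_of_one_le_right (by linarith [h a ha])
    (aux_prod_one_le _ _ fun i hi => h i (Finset.mem_of_mem_erase hi))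

private lemma aux_iter {c : ℝ} (hc : 0 < c) (f : ℝ → ℝ) (r : ℝ)
    (hfc : ∀ t : ℝ, 0 ≤ t → c * f t ≤ f ((2 : ℝ) ^ r * t)) (s : ℝ) (hs : 0 ≤ s) :
    ∀ k : ℕ, c ^ k * f ((((2 : ℝ) ^ r)⁻¹) ^ k * s) ≤ f s := by
  intro k; induction k with
  | zero => simp
  | succ k ih =>
    have hq : (0 : ℝ) < (2 : ℝ) ^ r := Real.rpow_pos_of_pos two_pos r
    have h0 : (0 : ℝ) ≤ (((2 : ℝ) ^ r)⁻¹) ^ (k + 1) * s := by positivity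
    have h1 := hfc _ h0
    have h2 : (2 : ℝ) ^ r * ((((2 : ℝ) ^ r)⁻¹) ^ (k + 1) * s)
        = (((2 : ℝ) ^ r)⁻¹) ^ k * s := by
      rw [pow_succ', ← mul_assoc, ← mul_assoc, mul_inv_cancel₀ hq.ne', one_mul]
    rw [h2] at h1
    calc c ^ (k + 1) * f ((((2 : ℝ) ^ r)⁻¹) ^ (k + 1) * s)
        = c ^ k * (c * f ((((2 : ℝ) ^ r)⁻¹) ^ (k + 1) * s)) := by ring
      _ ≤ c ^ k * f ((((2 : ℝ) ^ r)⁻¹) ^ k * s) :=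
          mul_le_mul_of_nonneg_left h1 (by positivity)
      _ ≤ f s := ih

private lemma aux_tri {V : Type*} (G : SimpleGraph V) (hconn : G.Connected) (o : V)
    (w : ℕ → V) : ∀ m : ℕ,
    G.dist o (w m) ≤ G.dist o (w 0) + ∑ i ∈ Finset.range m, G.dist (w i) (w (i + 1)) := by
  intro m; induction m with
  | zero => simp
  | succ m ih =>
    have tri : G.dist o (w (m + 1)) ≤ G.dist o (w m) + G.dist (w m) (w (m + 1)) :=
      hconn.dist_triangle
    rw [Finset.sum_range_succ]
    omega

set_option maxHeartbeats 1000000 in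
/-- Proposition `long range bc example`: admissible boundary
conditions for reasonable long-range interactions. Let `G` be an infinite connected
locally finite graph with origin `o`, and let `J` be reasonable interactions (symmetric,
integrability condition with `n = 2`, `J`-connectedness, `|J_{x,y}| ≤ d_G(x,y)^{-r}`,
`f` even and decreasing on `(0,∞)`, `f(2^r t) ≥ c f(t)`). If
`|ξ_x| ≤ M_ξ f(d_G(o,x)^{-r})` for all `x ≠ o`, then for every `λ ≥ 1/c`, `C ≥ 1`
and every vertex `x`, `Ã(x, V, λ, ξ, C) < ∞` (i.e. `ξ ∈ Ξ(λ)`). -/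
theorem stmt11 {V : Type*} [Countable V] (G : SimpleGraph V) [Infinite V]
    (hconn : G.Connected) [∀ x : V, Fintype (G.neighborSet x)] (o : V)
    (J : V → V → ℝ) (f : ℝ → ℝ) (δf Mf r c : ℝ)
    (hδf : 0 < δf) (hMf : 0 < Mf) (hr : 0 < r) (hc : 0 < c) (hc1 : c < 1)
    (hJsymm : ∀ x y, J x y = J y x)
    (hf1 : ∀ t, 1 ≤ f t)
    (hflog : ∀ t : ℝ, t ≠ 0 → |t| < δf → (Real.log (|t|⁻¹)) ^ ((1 : ℝ) / 2) ≤ f t)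
    (hJsum : ∀ x, Summable fun y => |J x y| * f (J x y))
    (hJbound : ∀ x, ∑' y, |J x y| * f (J x y) ≤ Mf)
    (hJconn : ∀ x y : V, ∃ (m : ℕ) (w : ℕ → V),
      IsWalk J Set.univ m w ∧ w 0 = x ∧ w m = y)
    (hJdist : ∀ x y : V, x ≠ y → |J x y| ≤ (G.dist x y : ℝ) ^ (-r))
    (hfeven : ∀ t, f (-t) = f t)
    (hfdec : AntitoneOn f (Set.Ioi 0))
    (hfc : ∀ t : ℝ, 0 ≤ t → c * f t ≤ f ((2 : ℝ) ^ r * t))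
    (ξ : V → ℝ) (Mξ : ℝ)
    (hξ : ∀ x : V, x ≠ o → |ξ x| ≤ Mξ * f ((G.dist o x : ℝ) ^ (-r)))
    (lam C : ℝ) (hlam : 1 / c ≤ lam) (hC : 1 ≤ C) (x : V) :
    tildeAL J f lam ξ C x Set.univ ≠ ⊤ := by
  classical
  set N : ℝ := max Mξ 0 with hNdef
  have hN : 0 ≤ N := le_max_right _ _
  set Fx : ℝ := f ((G.dist o x : ℝ) ^ (-r)) with hFxdef
  have hFx1 : 1 ≤ Fx := hf1 _
  set K : ℝ := 1 + |ξ x| + |ξ o| + N * Fx with hKdef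
  have hK1 : 1 ≤ K := by
    have := abs_nonneg (ξ x); have := abs_nonneg (ξ o)
    have : 0 ≤ N * Fx := mul_nonneg hN (by linarith)
    simp only [hKdef]; linarith [abs_nonneg (ξ x), abs_nonneg (ξ o)]
  have hK0 : 0 ≤ K := by linarith
  have hC0 : (0 : ℝ) ≤ C := by linarith
  have hlam1 : 1 ≤ lam := by
    have h1c : 1 ≤ 1 / c := by rw [le_div_iff₀ hc]; linarith
    linarith
  -- membership of ofReal K in the defining set
  have hmem : ENNReal.ofReal K ∈ {A : ℝ≥0∞ | 1 ≤ A ∧ ∀ (m : ℕ) (w : ℕ → V),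
      IsWalk J Set.univ m w → w 0 = x →
      ENNReal.ofReal |ξ (w m)| ≤ ENNReal.ofReal C * A *
        ENNReal.ofReal (lam ^ m * ∏ i ∈ Finset.range m, f (J (w i) (w (i + 1))))} := by
    constructor
    · exact ENNReal.one_le_ofReal.mpr hK1
    intro m w hw hw0
    obtain ⟨hwR, hwJ⟩ := hw
    set P : ℝ := ∏ i ∈ Finset.range m, f (J (w i) (w (i + 1))) with hPdef
    have hP1 : 1 ≤ P := by rw [hPdef]; exact aux_prod_one_le _ _ fun i _ => hf1 _
    have hlamm : 1 ≤ lam ^ m := one_le_pow₀ hlam1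
    have hlp1 : 1 ≤ lam ^ m * P := le_trans hlamm (le_mul_of_one_le_right (by linarith) hP1)
    have hlp0 : 0 ≤ lam ^ m * P := by linarith
    suffices hreal : |ξ (w m)| ≤ C * K * (lam ^ m * P) by
      calc ENNReal.ofReal |ξ (w m)| ≤ ENNReal.ofReal (C * K * (lam ^ m * P)) :=
            ENNReal.ofReal_le_ofReal hreal
        _ = ENNReal.ofReal C * ENNReal.ofReal K * ENNReal.ofReal (lam ^ m * P) := by
            rw [ENNReal.ofReal_mul (by positivity), ENNReal.ofReal_mul hC0]
    -- reduce to a bound without C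
    suffices hreal' : |ξ (w m)| ≤ K * (lam ^ m * P) by
      calc |ξ (w m)| ≤ K * (lam ^ m * P) := hreal'
        _ ≤ C * (K * (lam ^ m * P)) :=
            le_mul_of_one_le_left (by positivity) hC
        _ = C * K * (lam ^ m * P) := by ring
    by_cases hzo : w m = o
    · rw [hzo]
      calc |ξ o| ≤ K := by simp only [hKdef]; nlinarith [abs_nonneg (ξ x)]
        _ ≤ K * (lam ^ m * P) := le_mul_of_one_le_right hK0 hlp1
    rcases Nat.eq_zero_or_pos m with hm | hm
    · subst hm
      rw [hw0]
      calc |ξ x| ≤ K := by simp only [hKdef]; nlinarith [abs_nonneg (ξ o)]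
        _ ≤ K * (lam ^ 0 * P) := le_mul_of_one_le_right hK0 hlp1
    -- main case : m ≥ 1 and w m ≠ o
    set Mn : ℕ := max (G.dist o x) ((Finset.range m).sup fun i => G.dist (w i) (w (i + 1)))
      with hMndef
    have hDle : G.dist o (w m) ≤ (m + 1) * Mn := by
      have h1 := aux_tri G hconn o w m
      have h2 : G.dist o (w 0) ≤ Mn := by rw [hw0]; exact le_max_left _ _
      have h3 : ∑ i ∈ Finset.range m, G.dist (w i) (w (i + 1)) ≤ m * Mn := by
        calc ∑ i ∈ Finset.range m, G.dist (w i) (w (i + 1))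
            ≤ ∑ _i ∈ Finset.range m, Mn :=
              Finset.sum_le_sum fun i hi =>
                le_trans (Finset.le_sup (f := fun i => G.dist (w i) (w (i + 1))) hi)
                  (le_max_right _ _)
          _ = m * Mn := by rw [Finset.sum_const, Finset.card_range, smul_eq_mul]
      calc G.dist o (w m) ≤ G.dist o (w 0) + ∑ i ∈ Finset.range m, G.dist (w i) (w (i + 1)) := h1
        _ ≤ Mn + m * Mn := add_le_add h2 h3
        _ = (m + 1) * Mn := by ring
    have hDpos : 0 < G.dist o (w m) := hconn.pos_dist_of_ne (Ne.symm hzo)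
    have hMn1 : 1 ≤ Mn := by
      rcases Nat.eq_zero_or_pos Mn with h | h
      · rw [h, Nat.mul_zero] at hDle; omega
      · exact h
    have hDle2 : (G.dist o (w m) : ℝ) ≤ 2 ^ m * (Mn : ℝ) := by
      have h1 : (m + 1) * Mn ≤ 2 ^ m * Mn :=
        Nat.mul_le_mul_right Mn (by have := @Nat.lt_two_pow_self m; omega)
      have h2 : G.dist o (w m) ≤ 2 ^ m * Mn := le_trans hDle h1
      exact_mod_cast h2
    have hDpos' : (0 : ℝ) < (G.dist o (w m) : ℝ) := by exact_mod_cast hDpos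
    have hMnpos : (0 : ℝ) < (Mn : ℝ) := by exact_mod_cast hMn1
    set s : ℝ := (Mn : ℝ) ^ (-r) with hsdef
    have hs : 0 < s := Real.rpow_pos_of_pos hMnpos _
    have hq : (0 : ℝ) < (2 : ℝ) ^ r := Real.rpow_pos_of_pos two_pos r
    have h2mMn : (0 : ℝ) < 2 ^ m * (Mn : ℝ) := by positivity
    -- step 1 : f(D^{-r}) ≤ f((2^m Mn)^{-r})
    have hstep1 : f ((G.dist o (w m) : ℝ) ^ (-r)) ≤ f ((2 ^ m * (Mn : ℝ)) ^ (-r)) :=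
      hfdec (Set.mem_Ioi.mpr (Real.rpow_pos_of_pos h2mMn _))
        (Set.mem_Ioi.mpr (Real.rpow_pos_of_pos hDpos' _))
        (Real.rpow_le_rpow_of_nonpos hDpos' hDle2 (by linarith))
    -- rewrite (2^m Mn)^{-r} = q^m * s
    have hE : ((2 : ℝ) ^ m * (Mn : ℝ)) ^ (-r) = (((2 : ℝ) ^ r)⁻¹) ^ m * s := by
      rw [hsdef, Real.mul_rpow (by positivity) (Nat.cast_nonneg _)]
      congr 1
      rw [← Real.rpow_neg (by norm_num : (0:ℝ) ≤ 2) r,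
        ← Real.rpow_natCast ((2 : ℝ) ^ (-r)) m, ← Real.rpow_natCast (2 : ℝ) m,
        ← Real.rpow_mul (by norm_num : (0:ℝ) ≤ 2), ← Real.rpow_mul (by norm_num : (0:ℝ) ≤ 2)]
      ring_nf
    -- step 2 : f(q^m * s) ≤ lam^m * f s
    have hiter := aux_iter hc f r hfc s hs.le m
    have hcm : (0 : ℝ) < c ^ m := pow_pos hc m
    have hinvle : (c ^ m)⁻¹ ≤ lam ^ m := by
      have h1 : (1 / c) ^ m ≤ lam ^ m := pow_le_pow_left₀ (by positivity) hlam m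
      simpa [one_div, inv_pow] using h1
    have hfs0 : (0 : ℝ) < f s := lt_of_lt_of_le zero_lt_one (hf1 s)
    have hstep2 : f ((((2 : ℝ) ^ r)⁻¹) ^ m * s) ≤ lam ^ m * f s := by
      calc f ((((2 : ℝ) ^ r)⁻¹) ^ m * s)
          = (c ^ m)⁻¹ * (c ^ m * f ((((2 : ℝ) ^ r)⁻¹) ^ m * s)) := by
            field_simp
        _ ≤ (c ^ m)⁻¹ * f s := mul_le_mul_of_nonneg_left hiter (by positivity)
        _ ≤ lam ^ m * f s := mul_le_mul_of_nonneg_right hinvle hfs0.le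
    -- step 3 : f s ≤ Fx * P
    have hstep3 : f s ≤ Fx * P := by
      rcases max_cases (G.dist o x) ((Finset.range m).sup fun i => G.dist (w i) (w (i + 1)))
        with ⟨hmax, _⟩ | ⟨hmax, _⟩
      · have : s = (G.dist o x : ℝ) ^ (-r) := by rw [hsdef, hMndef, hmax]
        rw [this, ← hFxdef]
        exact le_mul_of_one_le_right (by linarith) hP1
      · obtain ⟨i₀, hi₀mem, hi₀⟩ := Finset.exists_mem_eq_sup (Finset.range m)
          (Finset.nonempty_range_iff.mpr (by omega)) fun i => G.dist (w i) (w (i + 1))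
        have hJne : J (w i₀) (w (i₀ + 1)) ≠ 0 := hwJ i₀ (Finset.mem_range.mp hi₀mem)
        have hwne : w i₀ ≠ w (i₀ + 1) := by
          intro h
          have : Mn = 0 := by
            rw [hMndef, hmax, hi₀, h, SimpleGraph.dist_self]
          omega
        have hMneq : Mn = G.dist (w i₀) (w (i₀ + 1)) := by rw [hMndef, hmax, hi₀]
        have hJle : |J (w i₀) (w (i₀ + 1))| ≤ s := by
          rw [hsdef, hMneq]; exact hJdist _ _ hwne
        have hJpos : 0 < |J (w i₀) (w (i₀ + 1))| := abs_pos.mpr hJne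
        have h5 : f s ≤ f |J (w i₀) (w (i₀ + 1))| :=
          hfdec (Set.mem_Ioi.mpr hJpos) (Set.mem_Ioi.mpr hs) hJle
        have h6 : f |J (w i₀) (w (i₀ + 1))| = f (J (w i₀) (w (i₀ + 1))) := by
          rcases abs_cases (J (w i₀) (w (i₀ + 1))) with ⟨h, _⟩ | ⟨h, _⟩
          · rw [h]
          · rw [h, hfeven]
        have h7 : f (J (w i₀) (w (i₀ + 1))) ≤ P := by
          rw [hPdef]
          exact aux_single_le_prod _ (fun i => f (J (w i) (w (i + 1)))) (fun i _ => hf1 _) hi₀mem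
        calc f s ≤ P := by rw [h6] at h5; exact le_trans h5 h7
          _ ≤ Fx * P := le_mul_of_one_le_left (by linarith) hFx1
    -- combine
    have hfD : f ((G.dist o (w m) : ℝ) ^ (-r)) ≤ lam ^ m * (Fx * P) := by
      calc f ((G.dist o (w m) : ℝ) ^ (-r)) ≤ f ((2 ^ m * (Mn : ℝ)) ^ (-r)) := hstep1
        _ = f ((((2 : ℝ) ^ r)⁻¹) ^ m * s) := by rw [hE]
        _ ≤ lam ^ m * f s := hstep2
        _ ≤ lam ^ m * (Fx * P) := mul_le_mul_of_nonneg_left hstep3 (by linarith)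
    have hfD0 : 0 < f ((G.dist o (w m) : ℝ) ^ (-r)) := lt_of_lt_of_le zero_lt_one (hf1 _)
    have hξm : |ξ (w m)| ≤ N * f ((G.dist o (w m) : ℝ) ^ (-r)) := by
      calc |ξ (w m)| ≤ Mξ * f ((G.dist o (w m) : ℝ) ^ (-r)) := hξ _ hzo
        _ ≤ N * f ((G.dist o (w m) : ℝ) ^ (-r)) :=
            mul_le_mul_of_nonneg_right (le_max_left _ _) hfD0.le
    have hNFxK : N * Fx ≤ K := by
      simp only [hKdef]; nlinarith [abs_nonneg (ξ x), abs_nonneg (ξ o)]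
    calc |ξ (w m)| ≤ N * (lam ^ m * (Fx * P)) :=
          le_trans hξm (mul_le_mul_of_nonneg_left hfD hN)
      _ = (N * Fx) * (lam ^ m * P) := by ring
      _ ≤ K * (lam ^ m * P) := mul_le_mul_of_nonneg_right hNFxK hlp0
  exact ne_top_of_le_ne_top ENNReal.ofReal_ne_top (sInf_le hmem)
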